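/- (Sturm Comparison Theorem) Let V : ℝ → ℝ be bounded and continuous, let E₁ ≤ E₂ be reals, and for j = 1,2 let u_j be a solution of −u_j″ + V u_j = E_j u_j on [a,b], neither identically zero. Suppose a < b and u₁(a) = u₁(b) = 0. If E₂ > E₁, then u₂ has a zero in the open interval (a,b). If E₂ = E₁ and u₂(a) ≠ 0, then u₂ has a zero in (a,b). -/

import Mathlib

/-!
Let `W = u₁' u₂ - u₁ u₂'` be the Wronskian, so that `W' = (E₂ - E₁) u₁ u₂` on `[a, b]`.
Restrict to an interval `[a', b']` between consecutive zeros of `u₁` and, after rescaling,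
assume `u₁ > 0` there and `u₂ > 0` on `(a, b)` (if `u₂` had no zero there). Then `W` is
nondecreasing on `[a', b']`, while `W(a') = u₁'(a') u₂(a') ≥ 0 ≥ u₁'(b') u₂(b') = W(b')`; hence
`W ≡ 0` on `[a', b']`. If `E₁ < E₂` this contradicts `W' = (E₂ - E₁) u₁ u₂ > 0`. If `E₁ = E₂`
and `u₂(a) ≠ 0`, then `u₂ > 0` on `[a', b')`, and `(u₁ / u₂)' = W / u₂² = 0` forces
`u₁ / u₂ = u₁(a') / u₂(a') = 0` on `[a', b')`, contradicting `u₁ > 0` on `(a', b')`.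
-/

open Set Filter Topology

lemma HasDerivAt.nonneg_of_eq_zero_of_nonneg_right {f : ℝ → ℝ} {f' a c : ℝ}
    (hf : HasDerivAt f f' a) (hac : a < c) (h0 : f a = 0) (hpos : ∀ x ∈ Ioo a c, 0 ≤ f x) :
    0 ≤ f' := by
  refine ge_of_tendsto (hasDerivAt_iff_tendsto_slope_left_right.mp hf).2 ?_
  filter_upwards [Ioo_mem_nhdsGT hac] with x hx
  rw [slope_def_field, h0, sub_zero]
  exact div_nonneg (hpos x hx) (sub_nonneg.mpr hx.1.le)

lemma HasDerivAt.nonpos_of_eq_zero_of_nonneg_left {f : ℝ → ℝ} {f' a c : ℝ}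
    (hf : HasDerivAt f f' a) (hca : c < a) (h0 : f a = 0) (hpos : ∀ x ∈ Ioo c a, 0 ≤ f x) :
    f' ≤ 0 := by
  refine le_of_tendsto (hasDerivAt_iff_tendsto_slope_left_right.mp hf).1 ?_
  filter_upwards [Ioo_mem_nhdsLT hca] with x hx
  rw [slope_def_field, h0, sub_zero]
  exact div_nonpos_of_nonneg_of_nonpos (hpos x hx) (sub_nonpos.mpr hx.2.le)

lemma IsPreconnected.mul_pos_of_forall_ne_zero {s : Set ℝ} {u : ℝ → ℝ} (hs : IsPreconnected s)
    (hu : ContinuousOn u s) (h0 : ∀ x ∈ s, u x ≠ 0) {x y : ℝ} (hx : x ∈ s) (hy : y ∈ s) :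
    0 < u x * u y := by
  by_contra! h
  rcases mul_nonpos_iff.mp h with ⟨hux, huy⟩ | ⟨hux, huy⟩
  · obtain ⟨z, hz, hz0⟩ := hs.intermediate_value hy hx hu ⟨huy, hux⟩
    exact h0 z hz hz0
  · obtain ⟨z, hz, hz0⟩ := hs.intermediate_value hx hy hu ⟨hux, huy⟩
    exact h0 z hz hz0

lemma ContinuousOn.exists_adjacent_zeros {u : ℝ → ℝ} {a b x₀ : ℝ} (hu : ContinuousOn u (Icc a b))
    (ha : u a = 0) (hb : u b = 0) (hx₀ : x₀ ∈ Icc a b) (hux₀ : u x₀ ≠ 0) :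
    ∃ a' b', a ≤ a' ∧ b' ≤ b ∧ x₀ ∈ Ioo a' b' ∧ u a' = 0 ∧ u b' = 0 ∧
      ∀ x ∈ Ioo a' b', u x ≠ 0 := by
  set L := Icc a x₀ ∩ u ⁻¹' {0}
  set R := Icc x₀ b ∩ u ⁻¹' {0}
  have hL : IsClosed L :=
    (hu.mono (Icc_subset_Icc_right hx₀.2)).preimage_isClosed_of_isClosed isClosed_Icc
      isClosed_singleton
  have hR : IsClosed R :=
    (hu.mono (Icc_subset_Icc_left hx₀.1)).preimage_isClosed_of_isClosed isClosed_Icc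
      isClosed_singleton
  have hLbdd : BddAbove L := ⟨x₀, fun y hy => hy.1.2⟩
  have hRbdd : BddBelow R := ⟨x₀, fun y hy => hy.1.1⟩
  have hsup : sSup L ∈ L := hL.csSup_mem ⟨a, ⟨le_rfl, hx₀.1⟩, ha⟩ hLbdd
  have hinf : sInf R ∈ R := hR.csInf_mem ⟨b, ⟨hx₀.2, le_rfl⟩, hb⟩ hRbdd
  refine ⟨sSup L, sInf R, hsup.1.1, hinf.1.2, ⟨?_, ?_⟩, hsup.2, hinf.2, fun x hx hux => ?_⟩
  · exact hsup.1.2.lt_of_ne fun h => hux₀ (h ▸ hsup.2)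
  · exact hinf.1.1.lt_of_ne' fun h => hux₀ (h ▸ hinf.2)
  rcases le_total x x₀ with hxx₀ | hxx₀
  · exact hx.1.not_ge (le_csSup hLbdd ⟨⟨hsup.1.1.trans hx.1.le, hxx₀⟩, hux⟩)
  · exact hx.2.not_ge (csInf_le hRbdd ⟨⟨hxx₀, hx.2.le.trans hinf.1.2⟩, hux⟩)

noncomputable def wronskian (f g : ℝ → ℝ) (x : ℝ) : ℝ :=
  deriv f x * g x - f x * deriv g x

lemma wronskian_of_left_eq_zero {f g : ℝ → ℝ} {x : ℝ} (hf : f x = 0) :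
    wronskian f g x = deriv f x * g x := by
  simp [wronskian, hf]

lemma ContDiff.hasDerivAt_wronskian {f g : ℝ → ℝ} (hf : ContDiff ℝ 2 f) (hg : ContDiff ℝ 2 g)
    (x : ℝ) :
    HasDerivAt (wronskian f g) (deriv (deriv f) x * g x - f x * deriv (deriv g) x) x := by
  have hf' := hf.differentiable_deriv_two x
  have hg' := hg.differentiable_deriv_two x
  have hf₁ := hf.differentiable two_ne_zero x
  have hg₁ := hg.differentiable two_ne_zero x
  exact ((hf'.hasDerivAt.mul hg₁.hasDerivAt).sub (hf₁.hasDerivAt.mul hg'.hasDerivAt)).congr_deriv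
    (by ring)

lemma eqOn_div_of_wronskian_eqOn_zero {f g : ℝ → ℝ} {a b : ℝ} (hf : Differentiable ℝ f)
    (hg : Differentiable ℝ g) (hW : EqOn (wronskian f g) 0 (Icc a b))
    (hg0 : ∀ x ∈ Icc a b, g x ≠ 0) : ∀ x ∈ Icc a b, f x / g x = f a / g a := by
  refine constant_of_has_deriv_right_zero (hf.continuous.continuousOn.div
    hg.continuous.continuousOn hg0) fun x hx => ?_
  have hd := (hf x).hasDerivAt.div (hg x).hasDerivAt (hg0 x (Ico_subset_Icc_self hx))
  rw [← wronskian, hW (Ico_subset_Icc_self hx), Pi.zero_apply, zero_div] at hd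
  exact hd.hasDerivWithinAt

def IsSchrodingerSolOn (V : ℝ → ℝ) (E : ℝ) (s : Set ℝ) (u : ℝ → ℝ) : Prop :=
  ContDiff ℝ 2 u ∧ ∀ x ∈ s, deriv (deriv u) x = (V x - E) * u x

namespace IsSchrodingerSolOn

variable {V : ℝ → ℝ} {E E₁ E₂ a b : ℝ} {s t : Set ℝ} {u u₁ u₂ : ℝ → ℝ}

lemma mono (h : IsSchrodingerSolOn V E s u) (hts : t ⊆ s) : IsSchrodingerSolOn V E t u :=
  ⟨h.1, fun x hx => h.2 x (hts hx)⟩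

lemma const_mul (h : IsSchrodingerSolOn V E s u) (c : ℝ) :
    IsSchrodingerSolOn V E s fun x => c * u x := by
  refine ⟨contDiff_const.mul h.1, fun x hx => ?_⟩
  simp only [deriv_const_mul_field', h.2 x hx]
  ring

lemma hasDerivAt_wronskian (h₁ : IsSchrodingerSolOn V E₁ s u₁)
    (h₂ : IsSchrodingerSolOn V E₂ s u₂) {x : ℝ} (hx : x ∈ s) :
    HasDerivAt (wronskian u₁ u₂) ((E₂ - E₁) * (u₁ x * u₂ x)) x := by
  convert h₁.1.hasDerivAt_wronskian h₂.1 x using 1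
  rw [h₁.2 x hx, h₂.2 x hx]
  ring

lemma wronskian_eqOn_zero (h₁ : IsSchrodingerSolOn V E₁ (Icc a b) u₁)
    (h₂ : IsSchrodingerSolOn V E₂ (Icc a b) u₂) (hab : a < b) (hE : E₁ ≤ E₂) (ha : u₁ a = 0) (hb : u₁ b = 0) (hu₁ : ∀ x ∈ Ioo a b, 0 ≤ u₁ x)
    (hu₂ : ∀ x ∈ Ioo a b, 0 ≤ u₂ x) : EqOn (wronskian u₁ u₂) 0 (Icc a b) := by
  have hW x := h₁.1.hasDerivAt_wronskian h₂.1 x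
  have hmono : MonotoneOn (wronskian u₁ u₂) (Icc a b) := by
    refine monotoneOn_of_deriv_nonneg (convex_Icc a b)
      (fun x _ => (hW x).continuousAt.continuousWithinAt)
      (fun x _ => (hW x).differentiableAt.differentiableWithinAt) fun x hx => ?_
    rw [interior_Icc] at hx
    rw [(h₁.hasDerivAt_wronskian h₂ (Ioo_subset_Icc_self hx)).deriv]
    exact mul_nonneg (sub_nonneg.mpr hE) (mul_nonneg (hu₁ x hx) (hu₂ x hx))
  have hu₂' : ∀ x ∈ Icc a b, 0 ≤ u₂ x := by
    rw [← closure_Ioo hab.ne]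
    exact closure_minimal hu₂ (isClosed_le continuous_const h₂.1.continuous)
  have hWa : 0 ≤ wronskian u₁ u₂ a := by
    rw [wronskian_of_left_eq_zero ha]
    exact mul_nonneg ((h₁.1.differentiable two_ne_zero a).hasDerivAt
      |>.nonneg_of_eq_zero_of_nonneg_right hab ha hu₁) (hu₂' a (left_mem_Icc.mpr hab.le))
  have hWb : wronskian u₁ u₂ b ≤ 0 := by
    rw [wronskian_of_left_eq_zero hb]
    exact mul_nonpos_of_nonpos_of_nonneg ((h₁.1.differentiable two_ne_zero b).hasDerivAt
      |>.nonpos_of_eq_zero_of_nonneg_left hab hb hu₁) (hu₂' b (right_mem_Icc.mpr hab.le))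
  intro x hx
  have := hmono (left_mem_Icc.mpr hab.le) hx hx.1
  have := hmono hx (right_mem_Icc.mpr hab.le) hx.2
  simp only [Pi.zero_apply]
  linarith

lemma not_forall_pos_of_lt (h₁ : IsSchrodingerSolOn V E₁ (Icc a b) u₁)
    (h₂ : IsSchrodingerSolOn V E₂ (Icc a b) u₂) (hab : a < b) (hE : E₁ < E₂) (ha : u₁ a = 0) (hb : u₁ b = 0) (hu₁ : ∀ x ∈ Ioo a b, 0 < u₁ x) :
    ¬ ∀ x ∈ Ioo a b, 0 < u₂ x := by
  intro hu₂
  obtain ⟨m, hm⟩ := nonempty_Ioo.mpr hab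
  have hW := h₁.wronskian_eqOn_zero h₂ hab hE.le ha hb (fun x hx => (hu₁ x hx).le)
    (fun x hx => (hu₂ x hx).le)
  have hW0 : wronskian u₁ u₂ =ᶠ[𝓝 m] 0 :=
    eventually_of_mem (Icc_mem_nhds hm.1 hm.2) hW
  have hzero := (h₁.hasDerivAt_wronskian h₂ (Ioo_subset_Icc_self hm)).unique
    ((hasDerivAt_const m (0 : ℝ)).congr_of_eventuallyEq hW0)
  exact (mul_pos (sub_pos.mpr hE) (mul_pos (hu₁ m hm) (hu₂ m hm))).ne' hzero

lemma not_forall_pos_Ico (h₁ : IsSchrodingerSolOn V E (Icc a b) u₁)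
    (h₂ : IsSchrodingerSolOn V E (Icc a b) u₂) (hab : a < b) (ha : u₁ a = 0) (hb : u₁ b = 0)
    (hu₁ : ∀ x ∈ Ioo a b, 0 < u₁ x) : ¬ ∀ x ∈ Ico a b, 0 < u₂ x := by
  intro hu₂
  obtain ⟨m, hm⟩ := nonempty_Ioo.mpr hab
  have hW := h₁.wronskian_eqOn_zero h₂ hab le_rfl ha hb (fun x hx => (hu₁ x hx).le)
    (fun x hx => (hu₂ x (Ioo_subset_Ico_self hx)).le)
  have hIcc : Icc a m ⊆ Ico a b := Icc_subset_Ico_right hm.2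
  have hratio := eqOn_div_of_wronskian_eqOn_zero (h₁.1.differentiable two_ne_zero)
    (h₂.1.differentiable two_ne_zero) (hW.mono (hIcc.trans Ico_subset_Icc_self))
    (fun x hx => (hu₂ x (hIcc hx)).ne') m (right_mem_Icc.mpr hm.1.le)
  rw [ha, zero_div, div_eq_zero_iff] at hratio
  exact hratio.elim (hu₁ m hm).ne' (hu₂ m (Ioo_subset_Ico_self hm)).ne'

end IsSchrodingerSolOn

theorem sturm_comparison (V : ℝ → ℝ)
    (E₁ E₂ : ℝ) (u₁ u₂ : ℝ → ℝ) (a b : ℝ) (hab : a < b)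
    (hu₁ : ContDiff ℝ 2 u₁) (hu₂ : ContDiff ℝ 2 u₂)
    (hode₁ : ∀ x ∈ Icc a b, deriv (deriv u₁) x = (V x - E₁) * u₁ x)
    (hode₂ : ∀ x ∈ Icc a b, deriv (deriv u₂) x = (V x - E₂) * u₂ x)
    (hnz₁ : ∃ x ∈ Icc a b, u₁ x ≠ 0)
    (ha : u₁ a = 0) (hb : u₁ b = 0) :
    (E₁ < E₂ → ∃ x ∈ Ioo a b, u₂ x = 0) ∧
    (E₁ = E₂ → u₂ a ≠ 0 → ∃ x ∈ Ioo a b, u₂ x = 0) := by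
  have h₁ : IsSchrodingerSolOn V E₁ (Icc a b) u₁ := ⟨hu₁, hode₁⟩
  have h₂ : IsSchrodingerSolOn V E₂ (Icc a b) u₂ := ⟨hu₂, hode₂⟩
  obtain ⟨x₀, hx₀, hu₁x₀⟩ := hnz₁
  obtain ⟨a', b', haa', hb'b, hx₀', ha', hb', hne⟩ :=
    hu₁.continuous.continuousOn.exists_adjacent_zeros ha hb hx₀ hu₁x₀
  have hab' : a' < b' := hx₀'.1.trans hx₀'.2
  have hsub : Icc a' b' ⊆ Icc a b := Icc_subset_Icc haa' hb'b
  -- Multiplying a nonvanishing solution by one of its own values makes it positive.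
  have hv₁ := (h₁.const_mul (u₁ x₀)).mono hsub
  have hv₁0 : ∀ x ∈ Ioo a' b', 0 < u₁ x₀ * u₁ x := fun x hx =>
    isPreconnected_Ioo.mul_pos_of_forall_ne_zero hu₁.continuous.continuousOn hne hx₀' hx
  refine ⟨fun hlt => ?_, fun heq hu₂a => ?_⟩
  · by_contra! hne₂
    refine hv₁.not_forall_pos_of_lt ((h₂.const_mul (u₂ x₀)).mono hsub) hab' hlt
      (by simp [ha']) (by simp [hb']) hv₁0 fun x hx => ?_
    exact isPreconnected_Ioo.mul_pos_of_forall_ne_zero hu₂.continuous.continuousOn hne₂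
      ⟨haa'.trans_lt hx₀'.1, hx₀'.2.trans_le hb'b⟩ (Ioo_subset_Ioo haa' hb'b hx)
  · subst heq
    by_contra! hne₂
    have hne₂' : ∀ x ∈ Ico a b, u₂ x ≠ 0 := fun x hx =>
      hx.1.eq_or_lt.elim (fun h => h ▸ hu₂a) fun h => hne₂ x ⟨h, hx.2⟩
    refine hv₁.not_forall_pos_Ico ((h₂.const_mul (u₂ a)).mono hsub) hab'
      (by simp [ha']) (by simp [hb']) hv₁0 fun x hx => ?_
    exact isPreconnected_Ico.mul_pos_of_forall_ne_zero hu₂.continuous.continuousOn hne₂'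
      (left_mem_Ico.mpr hab) (Ico_subset_Ico haa' hb'b hx)
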